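/- Let F be a field of characteristic 2, and let X be the Sym(4)-set of 2-element subsets of {1,2,3,4} (equivalently, the coset space Sym(4)/Sym(2,2) for the Young subgroup Sym(2,2) = Sym{1,2} × Sym{3,4}). Then the permutation module FX over the group algebra F·Sym(4) does not have the double centraliser property, i.e. the natural map F·Sym(4) → DEnd_{F·Sym(4)}(FX) is not surjective. -/

import Mathlib

/-- The double centraliser property: every additive endomorphism of `P` commuting with all
`R`-linear endomorphisms of `P` is given by the action of an element of `R` (i.e. the natural
map `R → DEnd_R(P)` is surjective). -/
def HasDCP (R : Type*) [Ring R] (P : Type*) [AddCommGroup P] [Module R P] : Prop :=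
  ∀ σ : P →+ P, (∀ (α : P →ₗ[R] P) (p : P), σ (α p) = α (σ p)) → ∃ r : R, ∀ p : P, σ p = r • p

section Perm

variable (S : Type*) [CommRing S] (G : Type*) [Group G] (X : Type*) [MulAction G X]

/-- The action of `G` on the free module `X →₀ S` permuting the basis `X`,
as a monoid homomorphism into the endomorphism monoid. -/
noncomputable def permRep : G →* Module.End S (X →₀ S) where
  toFun g := Finsupp.lmapDomain S S (fun x => g • x)
  map_one' := by
    show Finsupp.lmapDomain S S (fun x : X => (1 : G) • x) = 1
    have : (fun x : X => (1 : G) • x) = id := funext fun x => one_smul G x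
    rw [this, Finsupp.lmapDomain_id]; rfl
  map_mul' g h := by
    show Finsupp.lmapDomain S S (fun x : X => (g * h) • x)
      = Finsupp.lmapDomain S S (fun x : X => g • x) * Finsupp.lmapDomain S S (fun x : X => h • x)
    have : (fun x : X => (g * h) • x) = (fun x => g • x) ∘ (fun x => h • x) :=
      funext fun x => mul_smul g h x
    rw [this, Finsupp.lmapDomain_comp]; rfl

/-- The algebra homomorphism `S[G] → End_S(SX)` defining the permutation module. -/
noncomputable def permAlgHom : MonoidAlgebra S G →ₐ[S] Module.End S (X →₀ S) :=
  MonoidAlgebra.lift (R := S) (M := G) (A := Module.End S (X →₀ S)) (permRep S G X)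

/-- The permutation module structure on the free `S`-module `X →₀ S` over the
group algebra `MonoidAlgebra S G`. -/
noncomputable instance permModule : Module (MonoidAlgebra S G) (X →₀ S) :=
  Module.compHom _ (permAlgHom S G X).toRingHom

lemma permModule_smul_def (r : MonoidAlgebra S G) (f : X →₀ S) :
    r • f = permAlgHom S G X r f := rfl

instance : IsScalarTower S (MonoidAlgebra S G) (X →₀ S) :=
  ⟨fun s r f => by
    rw [permModule_smul_def, permModule_smul_def, map_smul, LinearMap.smul_apply]⟩


end Perm

/-- The action of `Sym(4)` on the set of 2-element subsets of `{1,2,3,4}`. -/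
instance : MulAction (Equiv.Perm (Fin 4)) {s : Finset (Fin 4) // s.card = 2} where
  smul g s := ⟨s.1.image g, by rw [Finset.card_image_of_injective _ g.injective, s.2]⟩
  one_smul s := Subtype.ext (by
    show s.1.image ⇑(1 : Equiv.Perm (Fin 4)) = s.1
    simp)
  mul_smul g h s := Subtype.ext (by
    show s.1.image ⇑(g * h) = (s.1.image ⇑h).image ⇑g
    rw [Finset.image_image]
    rfl)

/-!
The complement map `κ : t ↦ tᶜ` on 2-subsets of `{1,2,3,4}` maps every pair `(x, y)` into the
same `Sym(4)`-orbit of `X × X`. Since an `F·Sym(4)`-endomorphism of `FX` is a matrix that is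
constant on these orbits, the permutation matrix of `κ` commutes with all of them, i.e. it lies
in `DEnd(FX)`. On the other hand there is a set `C` of matrix positions which every permutation
matrix of `Sym(4)` meets in an even number of entries while that of `κ` meets it in exactly one.
In characteristic `2` the functional `M ↦ ∑_{(t,s) ∈ C} M t s` therefore vanishes on the image
of `F·Sym(4)` but not on `κ`.
-/

open Finsupp Finset

def PreservesOrbitals (G : Type*) {X : Type*} [SMul G X] (π : X → X) : Prop :=
  ∀ x y : X, ∃ g : G, g • x = π x ∧ g • y = π y

section PermModule

variable {S : Type*} [CommRing S] {G : Type*} [Group G] {X : Type*} [MulAction G X]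

lemma permModule_single_one_smul (g : G) (f : X →₀ S) :
    MonoidAlgebra.single g (1 : S) • f = f.mapDomain (g • ·) := by
  rw [permModule_smul_def, permAlgHom, MonoidAlgebra.lift_single, one_smul]
  rfl

lemma permModule_linearMap_apply_single_smul
    (α : (X →₀ S) →ₗ[MonoidAlgebra S G] (X →₀ S)) (g : G) (x y : X) (c : S) :
    α (single (g • x) c) (g • y) = α (single x c) y := by
  rw [show single (g • x) c = (single x c).mapDomain (g • ·) from mapDomain_single.symm,
    ← permModule_single_one_smul, α.map_smul, permModule_single_one_smul,
    mapDomain_apply (MulAction.injective g)]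

lemma mapDomain_linearMap_comm_of_preservesOrbitals {π : Equiv.Perm X}
    (hπ : PreservesOrbitals G π) (α : (X →₀ S) →ₗ[MonoidAlgebra S G] (X →₀ S)) (f : X →₀ S) :
    (α f).mapDomain π = α (f.mapDomain π) := by
  induction f using Finsupp.induction_linear with
  | zero => simp
  | add f f' hf hf' => simp only [map_add, mapDomain_add, hf, hf']
  | single x c =>
    ext z
    obtain ⟨y, rfl⟩ := π.surjective z
    obtain ⟨g, hgx, hgy⟩ := hπ x y
    rw [mapDomain_apply π.injective, mapDomain_single, ← hgx, ← hgy,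
      permModule_linearMap_apply_single_smul]

variable [DecidableEq X]

lemma sum_mapDomain_single_apply (C : Finset (X × X)) (f : X → X) :
    ∑ p ∈ C, (single p.2 (1 : S)).mapDomain f p.1 = #{p ∈ C | f p.2 = p.1} := by
  simp only [mapDomain_single, single_apply, sum_boole]

lemma sum_smul_single_apply_eq_zero {C : Finset (X × X)}
    (hC : ∀ g : G, (#{p ∈ C | g • p.2 = p.1} : S) = 0) (r : MonoidAlgebra S G) :
    ∑ p ∈ C, (r • single p.2 (1 : S)) p.1 = 0 := by
  induction r using MonoidAlgebra.induction_linear with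
  | zero => simp
  | add r r' hr hr' => simp only [add_smul, Finsupp.add_apply, sum_add_distrib, hr, hr', add_zero]
  | single g b =>
    rw [← mul_one b, ← smul_eq_mul, ← MonoidAlgebra.smul_single]
    simp only [smul_assoc, permModule_single_one_smul, Finsupp.smul_apply, smul_eq_mul,
      ← Finset.mul_sum, sum_mapDomain_single_apply, hC, mul_zero]

theorem not_hasDCP_of_preservesOrbitals {π : Equiv.Perm X} (hπ : PreservesOrbitals G π)
    {C : Finset (X × X)} (hG : ∀ g : G, (#{p ∈ C | g • p.2 = p.1} : S) = 0)
    (hπC : (#{p ∈ C | π p.2 = p.1} : S) ≠ 0) :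
    ¬ HasDCP (MonoidAlgebra S G) (X →₀ S) := by
  intro h
  obtain ⟨r, hr⟩ := h (mapDomain.addMonoidHom π)
    (mapDomain_linearMap_comm_of_preservesOrbitals hπ)
  apply hπC
  calc (#{p ∈ C | π p.2 = p.1} : S)
      = ∑ p ∈ C, (single p.2 (1 : S)).mapDomain π p.1 := (sum_mapDomain_single_apply C π).symm
    _ = ∑ p ∈ C, (r • single p.2 (1 : S)) p.1 := sum_congr rfl fun p _ => by rw [← hr]; rfl
    _ = 0 := sum_smul_single_apply_eq_zero hG r

end PermModule

abbrev TwoSubset := {s : Finset (Fin 4) // s.card = 2}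

def TwoSubset.pair (i j : Fin 4) (h : i ≠ j := by decide) : TwoSubset := ⟨{i, j}, card_pair h⟩

def TwoSubset.compl : Equiv.Perm TwoSubset :=
  Function.Involutive.toPerm (fun s => ⟨s.1ᶜ, by rw [card_compl, s.2]; rfl⟩)
    fun s => Subtype.ext (compl_compl s.1)

-- Found by computer search; no set of fewer than nine positions has both parity properties.
def TwoSubset.oddPositions : Finset (TwoSubset × TwoSubset) :=
  {pair 0 1, pair 0 2} ×ˢ {pair 0 1, pair 0 2, pair 0 3} ∪
    {pair 0 3} ×ˢ {pair 1 2, pair 1 3, pair 2 3}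

lemma TwoSubset.compl_preservesOrbitals : PreservesOrbitals (Equiv.Perm (Fin 4)) compl := by
  unfold PreservesOrbitals
  decide

lemma TwoSubset.two_dvd_card_perm_oddPositions (g : Equiv.Perm (Fin 4)) :
    2 ∣ #{p ∈ oddPositions | g • p.2 = p.1} := by
  revert g
  decide

lemma TwoSubset.card_compl_oddPositions : #{p ∈ oddPositions | compl p.2 = p.1} = 1 := by
  decide

/-- **Section 7, example.** Let `F` be a field of characteristic `2` and let `X` be the
`Sym(4)`-set of 2-element subsets of `{1,2,3,4}` (the coset space `Sym(4)/Sym(2,2)`).  Then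
the permutation module `FX` over the group algebra `F·Sym(4)` does not have the double
centraliser property. -/
theorem young22_not_hasDCP_char_two
    (F : Type*) [Field F] [CharP F 2] :
    ¬ HasDCP (MonoidAlgebra F (Equiv.Perm (Fin 4)))
        ({s : Finset (Fin 4) // s.card = 2} →₀ F) :=
  not_hasDCP_of_preservesOrbitals TwoSubset.compl_preservesOrbitals
    (fun g => (CharP.cast_eq_zero_iff F 2 _).2 (TwoSubset.two_dvd_card_perm_oddPositions g))
    (by rw [TwoSubset.card_compl_oddPositions, Nat.cast_one]; exact one_ne_zero)
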